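/- For integers m ≥ 0 and n, k, s ≥ 1, one has x₁^m ш (x₀^n x₁^k x₀^s) = Σ_{m₁+m₂+m₃=m, m_i ≥ 0} C(m₂+k-1, k-1) · 𝔅_{m₁+1}^{n-1} x₀ x₁^{m₂+k} 𝔅_{m₃+1}^{s}, an identity of multisets of words, where a binomial coefficient c multiplying a multiset means the multiset repeated c times. -/

import Mathlib

/-- The shuffle product of two words, as a multiset of words. -/
def shuffle {X : Type*} : List X → List X → Multiset (List X)
  | u, [] => {u}
  | [], v => {v}
  | a :: u, b :: v =>
      (shuffle u (b :: v)).map (a :: ·) + (shuffle (a :: u) v).map (b :: ·)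
termination_by u v => u.length + v.length

/-- The two-letter alphabet `X = {x₀, x₁}`. -/
def x0 : Bool := false
def x1 : Bool := true

/-- `𝔅_r^m`: the multiset of all words `x₀^{m₁} x₁ x₀^{m₂} x₁ ⋯ x₁ x₀^{m_r}`
with `m₁ + ⋯ + m_r = m`, `m_i ≥ 0`. -/
def B (r m : ℕ) : Multiset (List Bool) :=
  (Finset.Nat.antidiagonalTuple r m).val.map fun f =>
    List.intercalate [x1] (List.ofFn fun i => List.replicate (f i) x0)

/-- `S w T`: the multiset of all concatenations `u ++ w ++ v` with `u ∈ S`, `v ∈ T`,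
counted with multiplicity. -/
def msConcat {X : Type*} (S : Multiset (List X)) (w : List X) (T : Multiset (List X)) :
    Multiset (List X) :=
  S.bind fun u => T.map fun v => u ++ w ++ v

/-!
Shuffling `x₁^m` into `x₀^n x₁^k x₀^s`, the letters `x₁` fall into three groups. Those placed
before the last letter of the first block give `𝔅_{m₁+1}^{n-1} x₀`, because `𝔅` satisfies
`𝔅_{r+1}^{n+1} = x₀ 𝔅_{r+1}^n + x₁ 𝔅_r^{n+1}`, the same recursion as the shuffle product. Those
merging with the run `x₁^k` before its last letter contribute the factor `C(m₂+k-1, k-1)` (Pascal's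
rule). The remaining ones are shuffled into `x₀^s`, and `x₁^{m₃} ш x₀^s = 𝔅_{m₃+1}^s`.
-/

open Finset

lemma Multiset.map_finsetSum {α β ι : Type*} (s : Finset ι) (F : ι → Multiset α) (g : α → β) :
    (∑ i ∈ s, F i).map g = ∑ i ∈ s, (F i).map g :=
  map_sum (Multiset.mapAddMonoidHom g) F s

lemma Finset.Nat.antidiagonalTuple_succ_val (k n : ℕ) :
    (Nat.antidiagonalTuple (k + 1) n).val =
      (antidiagonal n).val.bind fun p => (Nat.antidiagonalTuple k p.2).val.map (Fin.cons p.1) := by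
  change (↑(List.Nat.antidiagonalTuple (k + 1) n) : Multiset (Fin (k + 1) → ℕ)) = _
  rw [List.Nat.antidiagonalTuple, ← Multiset.coe_bind]
  rfl

lemma Finset.Nat.sum_antidiagonalTuple_succ {M : Type*} [AddCommMonoid M] (k n : ℕ)
    (g : (Fin (k + 1) → ℕ) → M) :
    ∑ f ∈ Nat.antidiagonalTuple (k + 1) n, g f =
      ∑ p ∈ antidiagonal n, ∑ f ∈ Nat.antidiagonalTuple k p.2, g (Fin.cons p.1 f) := by
  simp only [sum_eq_multiset_sum, antidiagonalTuple_succ_val, Multiset.map_bind,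
    Multiset.sum_bind, Multiset.map_map, Function.comp_def]

section Shuffle

variable {X : Type*}

@[simp] lemma shuffle_nil_right (u : List X) : shuffle u [] = {u} := by
  cases u <;> rw [shuffle]

@[simp] lemma shuffle_nil_left (v : List X) : shuffle [] v = {v} := by
  cases v <;> simp [shuffle]

lemma shuffle_cons_cons (a b : X) (u v : List X) :
    shuffle (a :: u) (b :: v) =
      (shuffle u (b :: v)).map (a :: ·) + (shuffle (a :: u) v).map (b :: ·) := by
  rw [shuffle]

lemma shuffle_replicate_succ_cons (c b : X) (m : ℕ) (v : List X) :
    shuffle (List.replicate (m + 1) c) (b :: v) =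
      (shuffle (List.replicate m c) (b :: v)).map (c :: ·) +
        (shuffle (List.replicate (m + 1) c) v).map (b :: ·) :=
  shuffle_cons_cons c b _ v

lemma map_cons_map_replicate_append (c : X) (a : ℕ) (T : Multiset (List X)) :
    (T.map (List.replicate a c ++ ·)).map (c :: ·) = T.map (List.replicate (a + 1) c ++ ·) := by
  rw [Multiset.map_map]
  rfl

lemma shuffle_replicate_replicate_append (c : X) (m k : ℕ) (v : List X) :
    shuffle (List.replicate m c) (List.replicate (k + 1) c ++ v) =
      ∑ p ∈ antidiagonal m, (p.1 + k).choose k •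
        (shuffle (List.replicate p.2 c) v).map (List.replicate (p.1 + k + 1) c ++ ·) := by
  induction m generalizing k with
  | zero => simp
  | succ m ihm =>
    induction k with
    | zero =>
      have hw : List.replicate (0 + 1) c ++ v = c :: v := rfl
      rw [hw, shuffle_replicate_succ_cons, ← hw, ihm, Nat.sum_antidiagonal_succ, add_comm]
      simp only [Multiset.map_finsetSum, map_cons_map_replicate_append,
        Nat.choose_zero_right, one_smul]
      rfl
    | succ k ihk =>
      have hw : List.replicate (k + 1 + 1) c ++ v = c :: (List.replicate (k + 1) c ++ v) := rfl
      rw [hw, shuffle_replicate_succ_cons, ← hw, ihm, ihk]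
      simp only [Nat.sum_antidiagonal_succ, Multiset.map_add, Multiset.map_finsetSum,
        Multiset.map_nsmul, map_cons_map_replicate_append]
      rw [add_left_comm, ← sum_add_distrib]
      congr 1
      · simp
      · refine sum_congr rfl fun ⟨i, j⟩ _ => ?_
        rw [show i + 1 + (k + 1) = i + k + 1 + 1 by omega, Nat.choose_succ_succ,
          show i + 1 + k = i + k + 1 by omega, show i + (k + 1) = i + k + 1 by omega,
          add_smul, add_comm]

@[simp] lemma msConcat_zero_left (w : List X) (T : Multiset (List X)) : msConcat 0 w T = 0 :=
  Multiset.zero_bind _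

lemma msConcat_add_left (S₁ S₂ : Multiset (List X)) (w : List X) (T : Multiset (List X)) :
    msConcat (S₁ + S₂) w T = msConcat S₁ w T + msConcat S₂ w T :=
  Multiset.add_bind _ _ _

lemma msConcat_singleton_left (u w : List X) (T : Multiset (List X)) :
    msConcat {u} w T = T.map (u ++ w ++ ·) :=
  Multiset.singleton_bind _ _

lemma msConcat_map_cons_left (c : X) (S : Multiset (List X)) (w : List X)
    (T : Multiset (List X)) :
    msConcat (S.map (c :: ·)) w T = (msConcat S w T).map (c :: ·) := by
  simp only [msConcat, Multiset.bind_map, Multiset.map_bind, Multiset.map_map]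
  rfl

lemma msConcat_add_right (S : Multiset (List X)) (w : List X) (T₁ T₂ : Multiset (List X)) :
    msConcat S w (T₁ + T₂) = msConcat S w T₁ + msConcat S w T₂ := by
  simp [msConcat, Multiset.bind_add]

def msConcatAddHom (S : Multiset (List X)) (w : List X) :
    Multiset (List X) →+ Multiset (List X) where
  toFun := msConcat S w
  map_zero' := by simp [msConcat]
  map_add' := msConcat_add_right S w

lemma msConcat_finsetSum_right {ι : Type*} (S : Multiset (List X)) (w : List X) (s : Finset ι)
    (T : ι → Multiset (List X)) :
    msConcat S w (∑ i ∈ s, T i) = ∑ i ∈ s, msConcat S w (T i) :=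
  map_sum (msConcatAddHom S w) T s

lemma msConcat_nsmul_right (S : Multiset (List X)) (w : List X) (c : ℕ) (T : Multiset (List X)) :
    msConcat S w (c • T) = c • msConcat S w T :=
  map_nsmul (msConcatAddHom S w) c T

lemma msConcat_map_append_right (S : Multiset (List X)) (w u : List X) (T : Multiset (List X)) :
    msConcat S w (T.map (u ++ ·)) = msConcat S (w ++ u) T := by
  simp [msConcat, Multiset.map_map]

end Shuffle

lemma B_one (m : ℕ) : B 1 m = {List.replicate m x0} := by
  simp [B, List.ofFn_succ]

lemma B_zero_succ (m : ℕ) : B 0 (m + 1) = 0 := rfl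

lemma B_add_two (r m : ℕ) :
    B (r + 2) m =
      ∑ p ∈ antidiagonal m, (B (r + 1) p.2).map (List.replicate p.1 x0 ++ x1 :: ·) := by
  rw [B, Nat.antidiagonalTuple_succ_val, Multiset.map_bind, sum_eq_multiset_sum, Multiset.bind,
    Multiset.join]
  refine congrArg Multiset.sum (Multiset.map_congr rfl fun p _ => ?_)
  rw [B, Multiset.map_map, Multiset.map_map]
  refine Multiset.map_congr rfl fun f _ => ?_
  simp [List.ofFn_succ, List.intercalate_cons_of_ne_nil]

lemma B_succ_zero (r : ℕ) : B (r + 1) 0 = {List.replicate r x1} := by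
  induction r with
  | zero => exact B_one 0
  | succ r ih => simp [B_add_two, ih, List.replicate_succ]

lemma B_succ_succ (r m : ℕ) :
    B (r + 1) (m + 1) = (B (r + 1) m).map (x0 :: ·) + (B r (m + 1)).map (x1 :: ·) := by
  cases r with
  | zero => simp [B_one, B_zero_succ, List.replicate_succ]
  | succ r =>
    have shift : ∀ p : ℕ × ℕ, (B (r + 1) p.2).map (List.replicate (p.1 + 1) x0 ++ x1 :: ·) =
        ((B (r + 1) p.2).map (List.replicate p.1 x0 ++ x1 :: ·)).map (x0 :: ·) := fun p => by
      simp [Multiset.map_map, List.replicate_succ]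
    rw [B_add_two, Nat.sum_antidiagonal_succ, add_comm]
    simp only [shift, ← Multiset.map_finsetSum, ← B_add_two, List.replicate_zero, List.nil_append]

lemma shuffle_replicate_x1_replicate_x0 (m s : ℕ) :
    shuffle (List.replicate m x1) (List.replicate s x0) = B (m + 1) s := by
  induction m generalizing s with
  | zero => simp [B_one]
  | succ m ihm =>
    induction s with
    | zero => simp [B_succ_zero]
    | succ s ihs =>
      rw [List.replicate_succ (n := s), shuffle_replicate_succ_cons, ← List.replicate_succ, ihm,
        ihs, B_succ_succ (m + 1), add_comm]

lemma shuffle_replicate_x1_replicate_x0_append (m n : ℕ) (w : List Bool) :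
    shuffle (List.replicate m x1) (List.replicate (n + 1) x0 ++ w) =
      ∑ p ∈ antidiagonal m, msConcat (B (p.1 + 1) n) [x0] (shuffle (List.replicate p.2 x1) w) := by
  induction m generalizing n with
  | zero => simp [B_one, msConcat_singleton_left, List.replicate_succ']
  | succ m ihm =>
    induction n with
    | zero =>
      have hw : List.replicate (0 + 1) x0 ++ w = x0 :: w := rfl
      rw [hw, shuffle_replicate_succ_cons, ← hw, ihm, Nat.sum_antidiagonal_succ, add_comm]
      simp [B_succ_zero, msConcat_singleton_left, Multiset.map_finsetSum, List.replicate_succ]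
    | succ n ihn =>
      have hw : List.replicate (n + 1 + 1) x0 ++ w = x0 :: (List.replicate (n + 1) x0 ++ w) := rfl
      rw [hw, shuffle_replicate_succ_cons, ← hw, ihm, ihn, Multiset.map_finsetSum,
        Multiset.map_finsetSum]
      conv_rhs => simp only [B_succ_succ _ n, msConcat_add_left, msConcat_map_cons_left,
        sum_add_distrib]
      rw [add_comm, Nat.sum_antidiagonal_succ (n := m) (f := fun p =>
        (msConcat (B p.1 (n + 1)) [x0] (shuffle (List.replicate p.2 x1) w)).map (x1 :: ·))]
      simp [B_zero_succ]

theorem shuffle_x1_pow_x0x1x0_general (m n k s : ℕ) (hn : 1 ≤ n) (hk : 1 ≤ k) :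
    shuffle (List.replicate m x1)
        (List.replicate n x0 ++ List.replicate k x1 ++ List.replicate s x0) =
      ∑ f ∈ Finset.Nat.antidiagonalTuple 3 m,
        Nat.choose (f 1 + k - 1) (k - 1) •
          msConcat (B (f 0 + 1) (n - 1)) (x0 :: List.replicate (f 1 + k) x1)
            (B (f 2 + 1) s) := by
  obtain ⟨n, rfl⟩ := Nat.exists_eq_add_of_le' hn
  obtain ⟨k, rfl⟩ := Nat.exists_eq_add_of_le' hk
  rw [List.append_assoc, shuffle_replicate_x1_replicate_x0_append, Nat.sum_antidiagonalTuple_succ]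
  refine sum_congr rfl fun ⟨a, b⟩ _ => ?_
  rw [shuffle_replicate_replicate_append, Nat.sum_antidiagonalTuple_succ, msConcat_finsetSum_right]
  refine sum_congr rfl fun ⟨i, j⟩ _ => ?_
  simp [shuffle_replicate_x1_replicate_x0, msConcat_nsmul_right, msConcat_map_append_right,
    ← add_assoc]

theorem shuffle_x1_pow_x0x1x0 (m n k s : ℕ) (hn : 1 ≤ n) (hk : 1 ≤ k) (hs : 1 ≤ s) :
    shuffle (List.replicate m x1)
        (List.replicate n x0 ++ List.replicate k x1 ++ List.replicate s x0) =
      ∑ f ∈ Finset.Nat.antidiagonalTuple 3 m,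
        Nat.choose (f 1 + k - 1) (k - 1) •
          msConcat (B (f 0 + 1) (n - 1)) (x0 :: List.replicate (f 1 + k) x1)
            (B (f 2 + 1) s) :=
  shuffle_x1_pow_x0x1x0_general m n k s hn hk
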